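/- The lexicographic extension of a pair (≈, ⊐), where ≈ is an equivalence relation and ⊐ is a well-founded relation compatible with ≈ (meaning s ≈ t ⊐ u implies s ⊐ u), restricted to lists of length at most a fixed bound B, is well-founded. Here a list xs is lexicographically greater than ys if there is an index i < min(|xs|,|ys|) such that xs_j ≈ ys_j for all j < i and xs_i ⊐ ys_i. -/
import Mathlib


/-- xs is lexicographically greater than ys w.r.t. (E, R): there is an index i,
valid in both lists, such that the elements are E-related before i and
R-related at i. -/
def LexExt {α : Type*} (E R : α → α → Prop) (xs ys : List α) : Prop :=
  ∃ (i : ℕ) (h1 : i < xs.length) (h2 : i < ys.length),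
    (∀ (j : ℕ) (hj1 : j < xs.length) (hj2 : j < ys.length), j < i →
      E (xs.get ⟨j, hj1⟩) (ys.get ⟨j, hj2⟩)) ∧
    R (xs.get ⟨i, h1⟩) (ys.get ⟨i, h2⟩)

theorem lexExt_cons_iff {α : Type*} (E R : α → α → Prop) (x y : α) (t s : List α) :
    LexExt E R (x::t) (y::s) ↔ R x y ∨ (E x y ∧ LexExt E R t s) := by
  constructor
  · rintro ⟨i, h1, h2, hE, hR⟩
    cases i with
    | zero => left; simpa using hR
    | succ k =>
      right
      constructor
      · have := hE 0 (by simp) (by simp) (Nat.succ_pos k)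
        simpa using this
      · exact ⟨k, Nat.lt_of_succ_lt_succ h1, Nat.lt_of_succ_lt_succ h2,
          fun j hj1 hj2 hji => by
            have := hE (j+1) (Nat.succ_lt_succ hj1) (Nat.succ_lt_succ hj2)
              (Nat.succ_lt_succ hji)
            simpa using this,
          by simpa using hR⟩
  · rintro (h | ⟨hExy, i, h1, h2, hEj, hR⟩)
    · exact ⟨0, Nat.succ_pos _, Nat.succ_pos _,
        fun j _ _ hj => absurd hj (Nat.not_lt_zero j), by simpa using h⟩
    · refine ⟨i+1, Nat.succ_lt_succ h1, Nat.succ_lt_succ h2, ?_, by simpa using hR⟩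
      intro j hj1 hj2 hji
      cases j with
      | zero =>simpa using hExy
      | succ m =>
        have := hEj m (Nat.lt_of_succ_lt_succ hj1) (Nat.lt_of_succ_lt_succ hj2)
          (Nat.lt_of_succ_lt_succ hji)
        simpa using this

theorem lexExt_acc_aux {α : Type*} (E R : α → α → Prop)
    (hequiv : Equivalence E)
    (hwf : WellFounded (fun a b => R b a))
    (hcompat : ∀ s t u : α, E s t → R t u → R s u) :
    ∀ B (l : List α), l.length ≤ B →
      Acc (fun ys xs => LexExt E R xs ys ∧ ys.length ≤ B) l := by
  intro B
  induction B with
  | zero =>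
    intro l _
    constructor
    rintro ys ⟨⟨i, _, h2, _⟩, hlen⟩
    omega
  | succ B ih =>
    intro l hl
    match l with
    | [] =>
      constructor
      rintro ys ⟨⟨i, h1, _, _⟩, _⟩
      simp at h1
    | x :: t =>
      have hlt : t.length ≤ B := by simpa using Nat.le_of_succ_le_succ hl
      have key : ∀ x, Acc (fun a b => R b a) x →
          ∀ t, Acc (fun ys xs => LexExt E R xs ys ∧ ys.length ≤ B) t →
          t.length ≤ B →
          Acc (fun ys xs => LexExt E R xs ys ∧ ys.length ≤ B + 1) (x :: t) := by
        intro x hx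
        induction hx with
        | intro x _ ihx =>
          intro t ht
          induction ht with
          | intro t _ iht =>
            intro hlen
            constructor
            rintro ys ⟨hlex, hylen⟩
            match ys with
            | [] => obtain ⟨i, _, h2, _⟩ := hlex; simp at h2
            | y :: s =>
              have hslen : s.length ≤ B := by simpa using Nat.le_of_succ_le_succ hylen
              rw [lexExt_cons_iff] at hlex
              rcases hlex with hR | ⟨hExy, hts⟩
              · exact ihx y hR s (ih s hslen) hslen
              · have hxs := iht s ⟨hts, hslen⟩ hslen
                constructor
                rintro zs ⟨hz, hzlen⟩
                apply hxs.inv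
                refine ⟨?_, hzlen⟩
                match zs with
                | [] => obtain ⟨i, _, h2, _⟩ := hz; simp at h2
                | z :: u =>
                  rw [lexExt_cons_iff] at hz ⊢
                  rcases hz with h | ⟨hE, h⟩
                  · exact Or.inl (hcompat x y z hExy h)
                  · exact Or.inr ⟨hequiv.trans hExy hE, h⟩
      exact key x (hwf.apply x) t (ih t hlt) hlt

/-- The lexicographic extension of (≈, ⊐), with ≈ an equivalence relation,
⊐ well-founded and compatible with ≈, is well-founded on lists of length
at most a fixed bound B. -/
theorem lexExt_wf {α : Type*} (E R : α → α → Prop)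
    (hequiv : Equivalence E)
    (hwf : WellFounded (fun a b => R b a))
    (hcompat : ∀ s t u : α, E s t → R t u → R s u)
    (B : ℕ) :
    WellFounded (fun ys xs : {l : List α // l.length ≤ B} =>
      LexExt E R xs.val ys.val) := by
  have main : ∀ (l : List α),
      Acc (fun ys xs => LexExt E R xs ys ∧ ys.length ≤ B) l →
      ∀ (hl : l.length ≤ B),
      Acc (fun ys xs : {l : List α // l.length ≤ B} =>
        LexExt E R xs.val ys.val) ⟨l, hl⟩ := by
    intro l h
    induction h with
    | intro l _ ihl =>
      intro hl
      constructor
      rintro ⟨ys, hys⟩ hlex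
      exact ihl ys ⟨hlex, hys⟩ hys
  exact ⟨fun ⟨l, hl⟩ => main l (lexExt_acc_aux E R hequiv hwf hcompat B l hl) hl⟩
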